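/- arXiv:math/0510493 — 2 statements merged into one kernel-verified Lean document; each statement's English description precedes it below -/
import Mathlib

section
/- Solution of the Sachs equations: let I ⊆ ℝ be an open interval with 0 ∈ I, let ρ, σ : I → ℂ be differentiable and satisfy ρ'(r) = ρ(r)² + σ(r)·conj(σ(r)) and σ'(r) = (ρ(r) + conj(ρ(r)))·σ(r) for all r ∈ I. Set ρ₀ = ρ(0), σ₀ = σ(0), θ₀ = Re ρ₀, and D(r) = 1 − 2θ₀r + (ρ₀·conj(ρ₀) − σ₀·conj(σ₀))·r². If D(r) ≠ 0 for all r ∈ I, then for all r ∈ I: ρ(r) = (ρ₀ − (ρ₀·conj(ρ₀) − σ₀·conj(σ₀))·r)/D(r) and σ(r) = σ₀/D(r). -/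
open Complex ComplexConjugate

/-! The Sachs equations form an autonomous ODE `(ρ, σ)' = F(ρ, σ)` whose right-hand side
`F(ρ, σ) = (ρ² + σσ̄, (ρ + ρ̄)σ)` is polynomial in the real coordinates, hence locally Lipschitz.
A direct computation shows that the claimed closed-form pair, whose denominator `D` is real,
solves the same system with the same value at `0`; uniqueness of solutions of Lipschitz ODEs
then identifies the two on the whole interval. -/

open Set in
theorem ODE_solution_unique_of_mem_Ioo_of_locallyLipschitz {E : Type*} [NormedAddCommGroup E]
    [NormedSpace ℝ E] {v : E → E} (hv : LocallyLipschitz v) {f g : ℝ → E} {a b t₀ : ℝ}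
    (ht₀ : t₀ ∈ Ioo a b) (hf : ∀ t ∈ Ioo a b, HasDerivAt f (v (f t)) t)
    (hg : ∀ t ∈ Ioo a b, HasDerivAt g (v (g t)) t) (heq : f t₀ = g t₀) :
    EqOn f g (Ioo a b) := by
  intro t ht
  obtain ⟨a', ha, ha'⟩ := exists_between (lt_min ht.1 ht₀.1)
  obtain ⟨b', hb', hb⟩ := exists_between (max_lt ht.2 ht₀.2)
  have hIcc : Icc a' b' ⊆ Ioo a b := Icc_subset_Ioo ha hb
  have hIoo : Ioo a' b' ⊆ Ioo a b := Ioo_subset_Icc_self.trans hIcc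
  have hfc : ContinuousOn f (Icc a' b') := HasDerivAt.continuousOn fun s hs => hf s (hIcc hs)
  have hgc : ContinuousOn g (Icc a' b') := HasDerivAt.continuousOn fun s hs => hg s (hIcc hs)
  -- `v` is Lipschitz on the compact set swept out by both trajectories over `[a', b']`.
  set S := f '' Icc a' b' ∪ g '' Icc a' b'
  obtain ⟨K, hK⟩ := hv.locallyLipschitzOn.exists_lipschitzOnWith_of_compact
    ((isCompact_Icc.image_of_continuousOn hfc).union (isCompact_Icc.image_of_continuousOn hgc))
  refine ODE_solution_unique_of_mem_Icc (v := fun _ => v) (s := fun _ => S) (fun _ _ => hK)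
    ⟨(min_le_right _ _).trans_lt' ha', hb'.trans_le' (le_max_right _ _)⟩ hfc
    (fun s hs => hf s (hIoo hs)) (fun s hs => .inl ⟨s, Ioo_subset_Icc_self hs, rfl⟩) hgc
    (fun s hs => hg s (hIoo hs)) (fun s hs => .inr ⟨s, Ioo_subset_Icc_self hs, rfl⟩) heq
    ⟨ha'.le.trans (min_le_left _ _), (le_max_left _ _).trans hb'.le⟩

noncomputable section

def sachsField (p : ℂ × ℂ) : ℂ × ℂ := (p.1 ^ 2 + p.2 * conj p.2, (p.1 + conj p.1) * p.2)

theorem contDiff_sachsField : ContDiff ℝ 1 sachsField := by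
  have hconj : ContDiff ℝ 1 (conj : ℂ → ℂ) := conjCLE.contDiff
  unfold sachsField
  fun_prop

variable (ρ₀ σ₀ : ℂ)

def sachsDenom (r : ℝ) : ℝ := 1 - 2 * ρ₀.re * r + (normSq ρ₀ - normSq σ₀) * r ^ 2

def sachsSolution (r : ℝ) : ℂ × ℂ :=
  ((ρ₀ - (ρ₀ * conj ρ₀ - σ₀ * conj σ₀) * r) / sachsDenom ρ₀ σ₀ r, σ₀ / sachsDenom ρ₀ σ₀ r)

theorem ofReal_sachsDenom (r : ℝ) : (sachsDenom ρ₀ σ₀ r : ℂ) =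
    1 - 2 * (ρ₀.re : ℂ) * r + (ρ₀ * conj ρ₀ - σ₀ * conj σ₀) * (r : ℂ) ^ 2 := by
  simp [sachsDenom, mul_conj]

theorem sachsSolution_zero : sachsSolution ρ₀ σ₀ 0 = (ρ₀, σ₀) := by
  simp [sachsSolution, sachsDenom]

theorem hasDerivAt_sachsDenom (r : ℝ) :
    HasDerivAt (sachsDenom ρ₀ σ₀) (-2 * ρ₀.re + 2 * (normSq ρ₀ - normSq σ₀) * r) r := by
  refine ((((hasDerivAt_id' r).const_mul (2 * ρ₀.re)).const_sub 1).add
    ((hasDerivAt_pow 2 r).const_mul (normSq ρ₀ - normSq σ₀))).congr_deriv ?_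
  norm_num
  ring

theorem hasDerivAt_sachsSolution {r : ℝ} (hr : sachsDenom ρ₀ σ₀ r ≠ 0) :
    HasDerivAt (sachsSolution ρ₀ σ₀) (sachsField (sachsSolution ρ₀ σ₀ r)) r := by
  have hd := (hasDerivAt_sachsDenom ρ₀ σ₀ r).ofReal_comp
  have hd0 : (sachsDenom ρ₀ σ₀ r : ℂ) ≠ 0 := ofReal_ne_zero.mpr hr
  have hnum :=
    ((hasDerivAt_id' r).ofReal_comp.const_mul (ρ₀ * conj ρ₀ - σ₀ * conj σ₀)).const_sub ρ₀
  refine ((hnum.div hd hd0).prodMk ((hasDerivAt_const r σ₀).div hd hd0)).congr_deriv ?_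
  have hd_eq := ofReal_sachsDenom ρ₀ σ₀ r
  simp only [sachsField, sachsSolution, map_div₀, map_sub, map_mul, conj_ofReal, conj_conj,
    Prod.mk.injEq]
  generalize (sachsDenom ρ₀ σ₀ r : ℂ) = d at hd0 hd_eq ⊢
  push_cast
  simp only [← mul_conj, re_eq_add_conj] at hd_eq ⊢
  constructor <;> field_simp <;> rw [hd_eq] <;> ring

end

/-- Solution of the Sachs equations: on an open interval `(a,b)` containing `0`, if
`ρ` and `σ` satisfy `ρ' = ρ² + σ·conj σ` and `σ' = (ρ + conj ρ)·σ`, and the quadratic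
`D(r) = 1 − 2θ₀r + (ρ₀·conj ρ₀ − σ₀·conj σ₀)r²` (with `ρ₀ = ρ(0)`, `σ₀ = σ(0)`,
`θ₀ = Re ρ₀`) does not vanish on `(a,b)`, then
`ρ(r) = (ρ₀ − (ρ₀·conj ρ₀ − σ₀·conj σ₀)r)/D(r)` and `σ(r) = σ₀/D(r)` on `(a,b)`. -/
theorem sachs_solution (a b : ℝ) (ha : a < 0) (hb : 0 < b)
    (ρ σ : ℝ → ℂ)
    (hρ : ∀ r ∈ Set.Ioo a b, HasDerivAt ρ (ρ r ^ 2 + σ r * conj (σ r)) r)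
    (hσ : ∀ r ∈ Set.Ioo a b, HasDerivAt σ ((ρ r + conj (ρ r)) * σ r) r)
    (D : ℝ → ℂ)
    (hD : ∀ r : ℝ, D r = 1 - 2 * ((ρ 0).re : ℂ) * (r : ℂ)
        + (ρ 0 * conj (ρ 0) - σ 0 * conj (σ 0)) * (r : ℂ) ^ 2)
    (hDne : ∀ r ∈ Set.Ioo a b, D r ≠ 0) :
    ∀ r ∈ Set.Ioo a b,
      ρ r = (ρ 0 - (ρ 0 * conj (ρ 0) - σ 0 * conj (σ 0)) * (r : ℂ)) / D r ∧
      σ r = σ 0 / D r := by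
  have hD' : ∀ r, D r = sachsDenom (ρ 0) (σ 0) r := fun r => by rw [hD, ofReal_sachsDenom]
  have hsol : Set.EqOn (fun r => (ρ r, σ r)) (sachsSolution (ρ 0) (σ 0)) (Set.Ioo a b) :=
    ODE_solution_unique_of_mem_Ioo_of_locallyLipschitz contDiff_sachsField.locallyLipschitz
      ⟨ha, hb⟩ (fun r hr => (hρ r hr).prodMk (hσ r hr))
      (fun r hr => hasDerivAt_sachsSolution _ _ fun h => hDne r hr (by rw [hD', h, ofReal_zero]))
      (sachsSolution_zero _ _).symm
  intro r hr
  rw [hD']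
  exact Prod.ext_iff.mp (hsol hr)
end

section
/- Equivalence of the two formulas for the reflected perpendicular coordinate: let ξ₀, ξ₁, η₀, η₁ ∈ ℂ and r₀ ∈ ℝ, with Δ := (1 − ξ₀·conj(ξ₀))·conj(ξ₁) − 2·conj(ξ₀) ≠ 0. Suppose the intersection equation holds: η₁ = ((1 + conj(ξ₀)ξ₁)²·η₀ − (ξ₀ − ξ₁)²·conj(η₀)) / (1 + ξ₀·conj(ξ₀))² + (ξ₀ − ξ₁)(1 + conj(ξ₀)ξ₁)·r₀ / (1 + ξ₀·conj(ξ₀)). Then ((conj(ξ₀) − conj(ξ₁))²·η₀ − (1 + ξ₀·conj(ξ₁))²·conj(η₀) + (conj(ξ₀) − conj(ξ₁))(1 + ξ₀·conj(ξ₁))(1 + ξ₀·conj(ξ₀))·r₀)/Δ² = (−(1 + ξ₀·conj(ξ₀))²·conj(η₁) + 2(conj(ξ₀) − conj(ξ₁))(1 + ξ₀·conj(ξ₁))(1 + ξ₀·conj(ξ₀))·r₀)/Δ². -/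
open Complex ComplexConjugate

/-!
Clearing the positive real denominator `(1 + |ξ₀|²)²` from the intersection equation and
conjugating it expresses `(1 + |ξ₀|²)² * conj η₁` linearly in `η₀`, `conj η₀` and `r₀`;
substituting this into the second numerator gives the first one identically.
-/

lemma one_add_mul_conj_ne_zero (z : ℂ) : 1 + z * conj z ≠ 0 := by
  rw [mul_conj]
  exact_mod_cast (add_pos_of_pos_of_nonneg one_pos (normSq_nonneg z)).ne'

lemma sq_one_add_mul_conj_mul_of_intersection {ξ₀ ξ₁ η₀ η₁ : ℂ} {r₀ : ℝ}
    (hint : η₁ = ((1 + conj ξ₀ * ξ₁) ^ 2 * η₀ - (ξ₀ - ξ₁) ^ 2 * conj η₀) /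
        (1 + ξ₀ * conj ξ₀) ^ 2
      + (ξ₀ - ξ₁) * (1 + conj ξ₀ * ξ₁) * (r₀ : ℂ) / (1 + ξ₀ * conj ξ₀)) :
    (1 + ξ₀ * conj ξ₀) ^ 2 * η₁ = (1 + conj ξ₀ * ξ₁) ^ 2 * η₀ - (ξ₀ - ξ₁) ^ 2 * conj η₀
      + (ξ₀ - ξ₁) * (1 + conj ξ₀ * ξ₁) * (1 + ξ₀ * conj ξ₀) * r₀ := by
  rw [hint]
  field_simp [one_add_mul_conj_ne_zero ξ₀]

theorem reflected_eta_formulas_general (ξ₀ ξ₁ η₀ η₁ Δ : ℂ) (r₀ : ℝ)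
    (hint : η₁ = ((1 + conj ξ₀ * ξ₁) ^ 2 * η₀ - (ξ₀ - ξ₁) ^ 2 * conj η₀) /
        (1 + ξ₀ * conj ξ₀) ^ 2
      + (ξ₀ - ξ₁) * (1 + conj ξ₀ * ξ₁) * (r₀ : ℂ) / (1 + ξ₀ * conj ξ₀)) :
    ((conj ξ₀ - conj ξ₁) ^ 2 * η₀ - (1 + ξ₀ * conj ξ₁) ^ 2 * conj η₀
        + (conj ξ₀ - conj ξ₁) * (1 + ξ₀ * conj ξ₁) * (1 + ξ₀ * conj ξ₀) * (r₀ : ℂ)) / Δ ^ 2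
      = (-(1 + ξ₀ * conj ξ₀) ^ 2 * conj η₁
        + 2 * (conj ξ₀ - conj ξ₁) * (1 + ξ₀ * conj ξ₁) * (1 + ξ₀ * conj ξ₀) * (r₀ : ℂ)) /
          Δ ^ 2 := by
  have hconj := congrArg conj (sq_one_add_mul_conj_mul_of_intersection hint)
  simp only [map_add, map_sub, map_mul, map_pow, map_one, conj_conj, conj_ofReal] at hconj
  congr 1
  linear_combination hconj

/-- Equivalence of the two formulas for the reflected perpendicular coordinate, under
the intersection equation. -/
theorem reflected_eta_formulas (ξ₀ ξ₁ η₀ η₁ Δ : ℂ) (r₀ : ℝ)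
    (hΔdef : Δ = (1 - ξ₀ * conj ξ₀) * conj ξ₁ - 2 * conj ξ₀) (hΔ : Δ ≠ 0)
    (hint : η₁ = ((1 + conj ξ₀ * ξ₁) ^ 2 * η₀ - (ξ₀ - ξ₁) ^ 2 * conj η₀) /
        (1 + ξ₀ * conj ξ₀) ^ 2
      + (ξ₀ - ξ₁) * (1 + conj ξ₀ * ξ₁) * (r₀ : ℂ) / (1 + ξ₀ * conj ξ₀)) :
    ((conj ξ₀ - conj ξ₁) ^ 2 * η₀ - (1 + ξ₀ * conj ξ₁) ^ 2 * conj η₀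
        + (conj ξ₀ - conj ξ₁) * (1 + ξ₀ * conj ξ₁) * (1 + ξ₀ * conj ξ₀) * (r₀ : ℂ)) / Δ ^ 2
      = (-(1 + ξ₀ * conj ξ₀) ^ 2 * conj η₁
        + 2 * (conj ξ₀ - conj ξ₁) * (1 + ξ₀ * conj ξ₁) * (1 + ξ₀ * conj ξ₀) * (r₀ : ℂ)) /
          Δ ^ 2 :=
  reflected_eta_formulas_general ξ₀ ξ₁ η₀ η₁ Δ r₀ hint
end
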